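/- arXiv:1104.3334 — 8 statements merged into one kernel-verified Lean document; each statement's English description precedes it below -/
import Mathlib

section
/- Let G be a graph on n vertices with independence number α(G) ≤ k, and let W be a set of vertices of G. If, for some integer i with 1 ≤ i ≤ 12k, the graph G contains a cycle of length n − i passing through every vertex of W such that every vertex not on this cycle has degree at least 13k in G, then G contains a cycle of length n − 1 passing through every vertex of W. -/
/-!
Let `x` be a vertex off a cycle `C` with at least `k` neighbours `y` on `C`, and let `y⁺` be the
successor of `y` along `C`. The `k + 1` vertices `x` and `y⁺` cannot be independent. If `x ~ y⁺`,
insert `x` between `y` and `y⁺`; if `y₁⁺ ~ y₂⁺`, the cycle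
`x y₂ … y₁⁺ y₂⁺ … y₁ x` (the arc from `y₂` back to `y₁⁺` traversed against `C`) uses every vertex
of `C` and `x`. Either way `C` grows by exactly `x`. Since at most `12k` vertices lie off the
cycle, a vertex of degree `≥ 13k` off it always has more than `k` neighbours on it, so the
extension can be repeated until the cycle has length `n - 1`.
-/

/-- `IndepLE G k` means the independence number of `G` is at most `k`:
every set of pairwise non-adjacent vertices has size at most `k`. -/
def IndepLE {V : Type*} (G : SimpleGraph V) (k : ℕ) : Prop :=
  ∀ s : Finset V, (∀ u ∈ s, ∀ v ∈ s, u ≠ v → ¬ G.Adj u v) → s.card ≤ k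

open Finset

theorem IndepLE.exists_adj_of_lt_card {V : Type*} {G : SimpleGraph V} {k : ℕ}
    (h : IndepLE G k) {s : Finset V} (hs : k < #s) : ∃ u ∈ s, ∃ v ∈ s, G.Adj u v := by
  by_contra! hs'
  exact (h s fun u hu v hv _ => hs' u hu v hv).not_gt hs

namespace SimpleGraph

variable {V : Type*} {G : SimpleGraph V}

theorem degree_lt_card_filter_adj_add_card_compl [Fintype V] [DecidableEq V] [DecidableRel G.Adj]
    {s : Finset V} {x : V} (hx : x ∉ s) : G.degree x < #{y ∈ s | G.Adj x y} + #sᶜ := by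
  have hsub : insert x (G.neighborFinset x) ⊆ {y ∈ s | G.Adj x y} ∪ sᶜ := by
    intro y hy
    rcases mem_insert.1 hy with rfl | hy
    · exact mem_union_right _ (mem_compl.2 hx)
    · by_cases hys : y ∈ s
      · exact mem_union_left _ (mem_filter.2 ⟨hys, (G.mem_neighborFinset x y).1 hy⟩)
      · exact mem_union_right _ (mem_compl.2 hys)
  calc G.degree x < #(insert x (G.neighborFinset x)) := by
        rw [card_insert_of_notMem (by simp), card_neighborFinset_eq_degree]
        exact Nat.lt_succ_self _
    _ ≤ _ := (card_le_card hsub).trans (card_union_le _ _)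

namespace Walk

open scoped List

variable {u v : V}

theorem mem_tail_support_iff {p : G.Walk u u} (hp : ¬p.Nil) {w : V} :
    w ∈ p.support.tail ↔ w ∈ p.support :=
  ⟨List.mem_of_mem_tail, fun h => (p.mem_support_iff.1 h).elim (· ▸ end_mem_tail_support hp) id⟩

theorem IsCycle.card_support_toFinset [DecidableEq V] {c : G.Walk u u} (hc : c.IsCycle) :
    #c.support.toFinset = c.length := by
  have : c.support.toFinset = c.support.tail.toFinset := by
    ext
    simp [mem_tail_support_iff hc.not_nil]
  rw [this, List.toFinset_card_of_nodup hc.support_nodup, List.length_tail, length_support]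
  rfl

theorem exists_eq_append_cons_of_mem_darts {p : G.Walk u v} {d : G.Dart} (hd : d ∈ p.darts) :
    ∃ (q : G.Walk u d.fst) (r : G.Walk d.snd v), p = q.append (cons d.adj r) := by
  obtain ⟨q, r, rfl⟩ := (isSubwalk_toWalk_adj_iff_mem_darts p).2 hd
  exact ⟨q, r, by rw [← append_assoc]; rfl⟩

/-- Cutting a closed walk at one of its darts `d`: `cons d.adj P` is a rotation of `c`. -/
theorem exists_walk_of_mem_darts {c : G.Walk u u} {d : G.Dart} (hd : d ∈ c.darts) :
    ∃ P : G.Walk d.snd d.fst, P.support ~ c.support.tail ∧ c.darts ~ d :: P.darts := by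
  obtain ⟨q, r, rfl⟩ := exists_eq_append_cons_of_mem_darts hd
  refine ⟨r.append q, ?_, ?_⟩
  · simpa [support_append] using List.perm_append_comm
  · simpa [darts_append] using List.perm_middle.trans (List.perm_append_comm.cons d)

theorem IsPath.cons_cons_isCycle {w x y : V} {R : G.Walk w y} (hR : R.IsPath)
    (hx : x ∉ R.support) (hyx : G.Adj y x) (hxw : G.Adj x w) (hwy : w ≠ y) :
    (cons hyx (cons hxw R)).IsCycle := by
  refine (cons_isCycle_iff _ _).2 ⟨hR.cons hx, ?_⟩
  rw [edges_cons, List.mem_cons, not_or, Sym2.eq_iff]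
  refine ⟨?_, fun h => hx (R.snd_mem_support_of_mem_edges h)⟩
  rintro (⟨rfl, -⟩ | ⟨rfl, -⟩)
  · exact hx R.end_mem_support
  · exact hwy rfl

variable {c : G.Walk u u} {x : V}

theorem IsCycle.exists_perm_cons_of_adj_dart (hc : c.IsCycle) {d : G.Dart} (hd : d ∈ c.darts)
    (hx : x ∉ c.support) (h₁ : G.Adj x d.fst) (h₂ : G.Adj x d.snd) :
    ∃ (b : V) (c' : G.Walk b b), c'.IsCycle ∧ c'.support.tail ~ x :: c.support.tail := by
  obtain ⟨P, hP, -⟩ := exists_walk_of_mem_darts hd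
  have hxP : x ∉ P.support := fun h => hx (List.mem_of_mem_tail (hP.subset h))
  have hPpath : P.IsPath := isPath_def _ |>.2 (hP.nodup_iff.2 hc.support_nodup)
  exact ⟨_, _, hPpath.cons_cons_isCycle hxP h₁.symm h₂ d.adj.ne.symm, by simpa using hP⟩

theorem IsCycle.exists_perm_cons_of_adj_snd (hc : c.IsCycle) {d₁ d₂ : G.Dart}
    (hd₁ : d₁ ∈ c.darts) (hd₂ : d₂ ∈ c.darts) (hne : d₁ ≠ d₂) (hx : x ∉ c.support)
    (h₁ : G.Adj x d₁.fst) (h₂ : G.Adj x d₂.fst) (h : G.Adj d₁.snd d₂.snd) :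
    ∃ (b : V) (c' : G.Walk b b), c'.IsCycle ∧ c'.support.tail ~ x :: c.support.tail := by
  obtain ⟨P, hP, hPdarts⟩ := exists_walk_of_mem_darts hd₁
  have hd₂P : d₂ ∈ P.darts := (List.mem_cons.1 (hPdarts.subset hd₂)).resolve_left hne.symm
  obtain ⟨A, B, rfl⟩ := exists_eq_append_cons_of_mem_darts hd₂P
  have hAB : (A.support ++ B.support).Nodup := by
    simpa [support_append] using hP.nodup_iff.2 hc.support_nodup
  have hR : (A.reverse.append (cons h B)).support ~ c.support.tail := by
    refine List.Perm.trans ?_ hP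
    simpa [support_append] using (List.reverse_perm _).append_right _
  have hxR : x ∉ (A.reverse.append (cons h B)).support :=
    fun h => hx (List.mem_of_mem_tail (hR.subset h))
  have hRpath : (A.reverse.append (cons h B)).IsPath :=
    isPath_def _ |>.2 (hR.nodup_iff.2 hc.support_nodup)
  have hne' : d₂.fst ≠ d₁.fst := fun e =>
    List.disjoint_of_nodup_append hAB A.end_mem_support (by rw [e]; exact B.end_mem_support)
  exact ⟨_, _, hRpath.cons_cons_isCycle hxR h₁.symm h₂ hne', by simpa using hR⟩

theorem IsCycle.exists_perm_cons_of_le_card [DecidableEq V] [DecidableRel G.Adj] {k : ℕ}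
    (hind : IndepLE G k) (hc : c.IsCycle) (hx : x ∉ c.support)
    (hk : k ≤ #{y ∈ c.support.toFinset | G.Adj x y}) :
    ∃ (b : V) (c' : G.Walk b b), c'.IsCycle ∧ c'.support.tail ~ x :: c.support.tail := by
  set T : Finset G.Dart := {d ∈ c.darts.toFinset | G.Adj x d.fst}
  have hT : k ≤ #T := by
    refine hk.trans ((card_le_card fun y hy => ?_).trans (card_image_le (f := (·.fst))))
    obtain ⟨hy, hxy⟩ := mem_filter.1 hy
    have : y ∈ c.darts.map (·.fst) := by
      rw [map_fst_darts]
      exact (tail_support_perm_dropLast_support c).subset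
        ((mem_tail_support_iff hc.not_nil).2 (List.mem_toFinset.1 hy))
    obtain ⟨d, hd, rfl⟩ := List.mem_map.1 this
    exact mem_image_of_mem _ (mem_filter.2 ⟨List.mem_toFinset.2 hd, hxy⟩)
  have hinj : Set.InjOn (fun d : G.Dart => d.snd) T := fun d₁ h₁ d₂ h₂ =>
    List.inj_on_of_nodup_map (by rw [map_snd_darts]; exact hc.support_nodup)
      (List.mem_toFinset.1 (mem_filter.1 h₁).1) (List.mem_toFinset.1 (mem_filter.1 h₂).1)
  have hxT : x ∉ T.image (·.snd) := by
    simp only [mem_image, not_exists, not_and]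
    rintro d hd rfl
    exact hx (c.dart_snd_mem_support_of_mem_darts (List.mem_toFinset.1 (mem_filter.1 hd).1))
  obtain ⟨p, hp, q, hq, hpq⟩ := hind.exists_adj_of_lt_card (s := insert x (T.image (·.snd)))
    (by rw [card_insert_of_notMem hxT, card_image_of_injOn hinj]; omega)
  simp only [mem_insert, mem_image] at hp hq
  rcases hp with rfl | ⟨d₁, hd₁, rfl⟩ <;> rcases hq with rfl | ⟨d₂, hd₂, rfl⟩
  · exact (G.irrefl hpq).elim
  · obtain ⟨hd₂, hxd₂⟩ := mem_filter.1 hd₂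
    exact hc.exists_perm_cons_of_adj_dart (List.mem_toFinset.1 hd₂) hx hxd₂ hpq
  · obtain ⟨hd₁, hxd₁⟩ := mem_filter.1 hd₁
    exact hc.exists_perm_cons_of_adj_dart (List.mem_toFinset.1 hd₁) hx hxd₁ hpq.symm
  · obtain ⟨hd₁, hxd₁⟩ := mem_filter.1 hd₁
    obtain ⟨hd₂, hxd₂⟩ := mem_filter.1 hd₂
    refine hc.exists_perm_cons_of_adj_snd (List.mem_toFinset.1 hd₁) (List.mem_toFinset.1 hd₂)
      ?_ hx hxd₁ hxd₂ hpq
    rintro rfl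
    exact G.irrefl hpq

theorem IsCycle.exists_isCycle_length_eq [Fintype V] [DecidableEq V] [DecidableRel G.Adj]
    {k : ℕ} (hind : IndepLE G k) (hc : c.IsCycle)
    (hk : ∀ x ∉ c.support, k ≤ #{y ∈ c.support.toFinset | G.Adj x y}) {m : ℕ}
    (hcm : c.length ≤ m) (hm : m ≤ Fintype.card V) :
    ∃ (b : V) (c' : G.Walk b b), c'.IsCycle ∧ c'.length = m ∧ c.support ⊆ c'.support := by
  induction h : m - c.length generalizing u c with
  | zero => exact ⟨u, c, hc, by omega, List.Subset.refl _⟩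
  | succ j ih =>
    obtain ⟨x, hx⟩ : ∃ x, x ∉ c.support := by
      by_contra! hall
      have := card_le_card fun y (_ : y ∈ univ) => List.mem_toFinset.2 (hall y)
      rw [card_univ, hc.card_support_toFinset] at this
      omega
    obtain ⟨b, c', hc', hperm⟩ := hc.exists_perm_cons_of_le_card hind hx (hk x hx)
    have hmem : ∀ y, y ∈ c'.support ↔ y = x ∨ y ∈ c.support := fun y => by
      rw [← mem_tail_support_iff hc'.not_nil, hperm.mem_iff, List.mem_cons,
        mem_tail_support_iff hc.not_nil]
    have hlen : c'.length = c.length + 1 := by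
      simpa using hperm.length_eq
    have hk' : ∀ z ∉ c'.support, k ≤ #{y ∈ c'.support.toFinset | G.Adj z y} := fun z hz =>
      (hk z fun h => hz ((hmem z).2 (.inr h))).trans <| card_le_card <| filter_subset_filter _
        fun y hy => List.mem_toFinset.2 ((hmem y).2 (.inr (List.mem_toFinset.1 hy)))
    obtain ⟨b', c'', hc'', hlen'', hsub⟩ := ih hc' hk' (by omega) (by omega)
    exact ⟨b', c'', hc'', hlen'', fun y hy => hsub ((hmem y).2 (.inr hy))⟩

end Walk

end SimpleGraph

/-- If `G` is a graph on `n` vertices with `α(G) ≤ k` which contains, for some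
`1 ≤ i ≤ 12k`, a cycle of length `n - i` through all of `W` such that every vertex
off the cycle has degree at least `13k`, then `G` contains a cycle of length `n - 1`
through all of `W`. -/
theorem cycle_extension {n : ℕ} (G : SimpleGraph (Fin n)) [DecidableRel G.Adj]
    (k : ℕ) (hind : IndepLE G k) (W : Finset (Fin n))
    (h : ∃ i : ℕ, 1 ≤ i ∧ i ≤ 12 * k ∧
      ∃ (v : Fin n) (cyc : G.Walk v v), cyc.IsCycle ∧ cyc.length = n - i ∧
        (∀ w ∈ W, w ∈ cyc.support) ∧
        (∀ x : Fin n, x ∉ cyc.support → 13 * k ≤ G.degree x)) :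
    ∃ (v : Fin n) (cyc : G.Walk v v), cyc.IsCycle ∧ cyc.length = n - 1 ∧
      ∀ w ∈ W, w ∈ cyc.support := by
  obtain ⟨i, hi, hik, v, cyc, hc, hlen, hW, hdeg⟩ := h
  have hcard := hc.card_support_toFinset
  have h3 := hc.three_le_length
  have hk : ∀ x ∉ cyc.support, k ≤ #{y ∈ cyc.support.toFinset | G.Adj x y} := fun x hx => by
    have := G.degree_lt_card_filter_adj_add_card_compl (mt List.mem_toFinset.1 hx)
    rw [card_compl, Fintype.card_fin, hcard] at this
    have := hdeg x hx
    omega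
  obtain ⟨b, c', hc', hlen', hsub⟩ :=
    hc.exists_isCycle_length_eq hind hk (m := n - 1) (by omega) (by simp)
  exact ⟨b, c', hc', hlen', fun w hw => hsub (hW w hw)⟩
end

section
/- Let G be a graph with independence number α(G) ≤ k, let C be a cycle in G, and let x be a vertex of G not on C that has at least k neighbors among the vertices of C. Then G contains a cycle of length |C| + 1 whose vertex set is exactly the vertex set of C together with x. -/
namespace List

variable {α : Type*}

theorem IsChain.reverse_append {R : α → α → Prop} [Std.Symm R] {s t : List α}
    (h : (s ++ t).IsChain R) (hst : ∀ a ∈ s.head?, ∀ b ∈ t.head?, R a b) :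
    (s.reverse ++ t).IsChain R := by
  obtain ⟨hs, ht, -⟩ := isChain_append.mp h
  refine isChain_append.mpr
    ⟨isChain_reverse.mpr (hs.imp fun _ _ h => Std.Symm.symm _ _ h), ht, ?_⟩
  simpa [getLast?_reverse] using hst

theorem IsChain.cons_append_singleton {R : α → α → Prop} {l : List α} {x a b : α}
    (hl : l.IsChain R) (hb : l.head? = some b) (hxb : R x b) (ha : l.getLast? = some a)
    (hax : R a x) : (x :: (l ++ [x])).IsChain R :=
  List.isChain_cons.mpr ⟨by simp [head?_append, hb, hxb],
    isChain_append.mpr ⟨hl, isChain_singleton x, by simp [ha, hax]⟩⟩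

variable [DecidableEq α]

theorem exists_eq_append_cons_next {l : List α} {b : α} (hb : b ∈ l)
    (hlast : l.getLast? ≠ some b) : ∃ s t, l = s ++ b :: l.next b hb :: t := by
  have hne : l ≠ [] := ne_nil_of_mem hb
  have hdrop : b ∈ l.dropLast := by
    rw [← dropLast_append_getLast hne, mem_append, mem_singleton] at hb
    exact hb.resolve_right fun h => hlast (by rw [getLast?_eq_some_getLast hne, h])
  -- `l.next b hb` is by definition `l.nextOr b (l.get ⟨0, _⟩)`
  obtain ⟨s, t, hst⟩ := nextOr_infix_of_mem_dropLast hdrop (l.get ⟨0, length_pos_of_mem hb⟩)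
  exact ⟨s, t, hst.symm.trans (by simp only [append_assoc, cons_append, nil_append]; rfl)⟩

theorem IsRotated.head?_eq_next {l l' : List α} (h : l ~r l') (hl : l'.Nodup) {a : α}
    (ha : l.getLast? = some a) :
    l.head? = some (l'.next a (h.mem_iff.mp (mem_of_getLast? ha))) := by
  have hne : l ≠ [] := by rintro rfl; simp at ha
  obtain rfl : l.getLast hne = a := by simpa [getLast?_eq_some_getLast hne] using ha
  rw [← isRotated_next_eq h (h.nodup_iff.mpr hl) (getLast_mem hne),
    next_getLast_eq_head _ _ (h.nodup_iff.mpr hl), head?_eq_some_head hne]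

end List

open Finset

theorem IndepLE.exists_adj_of_injOn {V : Type*} [DecidableEq V] {G : SimpleGraph V} {k : ℕ}
    (hind : IndepLE G k) {N : Finset V} (hN : k ≤ #N) {σ : V → V} (hσ : Set.InjOn σ N) {x : V}
    (hx : x ∉ N.image σ) :
    (∃ a ∈ N, G.Adj x (σ a)) ∨ ∃ a ∈ N, ∃ b ∈ N, a ≠ b ∧ G.Adj (σ a) (σ b) := by
  by_contra! h
  have hindep := hind (insert x (N.image σ)) <| by
    simp only [mem_insert, mem_image]
    rintro u (rfl | ⟨a, ha, rfl⟩) w (rfl | ⟨b, hb, rfl⟩) huw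
    · exact absurd rfl huw
    · exact h.1 b hb
    · exact fun h' => h.1 a ha h'.symm
    · exact h.2 a ha b hb (fun hab => huw (congrArg σ hab))
  rw [card_insert_of_notMem hx, card_image_of_injOn hσ] at hindep
  omega

namespace SimpleGraph

variable {V : Type*} {G : SimpleGraph V}

theorem exists_isCycle_support_eq {x : V} {P : List V} (hP : P.Nodup) (hx : x ∉ P)
    (hlen : 2 ≤ P.length) (hchain : (x :: (P ++ [x])).IsChain G.Adj) :
    ∃ c : G.Walk x x, c.IsCycle ∧ c.support = x :: (P ++ [x]) := by
  obtain ⟨c, hsupp⟩ : ∃ c : G.Walk x x, c.support = x :: (P ++ [x]) :=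
    ⟨(Walk.ofSupport _ (List.cons_ne_nil _ _) hchain).copy rfl (by simp),
      (Walk.support_copy _ _ _).trans (Walk.support_ofSupport _ _)⟩
  have hlength : c.length = P.length + 1 := by
    have := c.length_support
    simp only [hsupp, List.length_cons, List.length_append, List.length_nil] at this
    omega
  refine ⟨c, Walk.isCycle_iff_isPath_tail_and_le_length.mpr ⟨?_, by omega⟩, hsupp⟩
  have hnil : ¬ c.Nil := by simp [← Walk.length_eq_zero_iff, hlength]
  rw [Walk.isPath_def, Walk.support_tail_of_not_nil _ hnil, hsupp, List.tail_cons]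
  exact hP.append (List.nodup_singleton x) (by simpa using hx)

namespace Walk

variable [DecidableEq V] {v x a : V} {c : G.Walk v v}

theorem exists_isRotated_getLast (hc : ¬ c.Nil) (ha : a ∈ c.support) :
    ∃ L, L.IsRotated c.support.tail ∧ (a :: L).IsChain G.Adj ∧ L.getLast? = some a := by
  let c' := c.rotate a ha
  refine ⟨c'.support.tail, c.support_rotate a ha, ?_, ?_⟩
  · rw [cons_tail_support]
    exact c'.isChain_adj_support
  · have hne : c'.support.tail ≠ [] :=
      List.ne_nil_of_mem (end_mem_tail_support ((nil_rotate ha).not.mpr hc))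
    rw [List.getLast?_eq_some_getLast hne, List.getLast_tail, c'.getLast_support]

theorem IsCycle.exists_perm_isChain_of_adj_next (hc : c.IsCycle) (ha : a ∈ c.support.tail)
    (hxa : G.Adj x a) (hxa' : G.Adj x (c.support.tail.next a ha)) :
    ∃ P, P.Perm c.support.tail ∧ (x :: (P ++ [x])).IsChain G.Adj := by
  obtain ⟨L, hrot, hchain, hlast⟩ := exists_isRotated_getLast hc.not_nil (List.mem_of_mem_tail ha)
  exact ⟨L, hrot.perm, hchain.tail.cons_append_singleton
    (hrot.head?_eq_next hc.support_nodup hlast) hxa' hlast hxa.symm⟩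

theorem IsCycle.exists_perm_isChain_of_adj_next_next (hc : c.IsCycle) {b : V}
    (ha : a ∈ c.support.tail) (hb : b ∈ c.support.tail) (hab : a ≠ b) (hxa : G.Adj x a)
    (hxb : G.Adj x b) (hnext : G.Adj (c.support.tail.next a ha) (c.support.tail.next b hb)) :
    ∃ P, P.Perm c.support.tail ∧ (x :: (P ++ [x])).IsChain G.Adj := by
  obtain ⟨L, hrot, hchain, hlast⟩ := exists_isRotated_getLast hc.not_nil (List.mem_of_mem_tail ha)
  have hbL : b ∈ L := hrot.mem_iff.mpr hb
  obtain ⟨s, t, hst⟩ := List.exists_eq_append_cons_next hbL (by rw [hlast]; simpa using hab)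
  rw [List.isRotated_next_eq hrot (hrot.nodup_iff.mpr hc.support_nodup) hbL] at hst
  have hhead : L.head? = some (c.support.tail.next a ha) :=
    hrot.head?_eq_next hc.support_nodup hlast
  have hsplit : L = (s ++ [b]) ++ (c.support.tail.next b hb :: t) := by simpa using hst
  refine ⟨(s ++ [b]).reverse ++ (c.support.tail.next b hb :: t), ?_, ?_⟩
  · exact ((List.reverse_perm _).append_right _).trans (hsplit ▸ hrot.perm)
  · -- `L = (a⁺ … b) ++ (b⁺ … a)` becomes `(b … a⁺) ++ (b⁺ … a)`
    have := G.symm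
    rw [hsplit] at hchain hhead hlast
    refine (hchain.tail.reverse_append ?_).cons_append_singleton (by simp) hxb ?_ hxa.symm
    · intro a' ha' b' hb'
      rw [List.head?_append, ha', Option.some_or, Option.some_inj] at hhead
      rw [List.head?_cons, Option.mem_some_iff] at hb'
      rw [hhead, ← hb']
      exact hnext
    · rwa [List.getLast?_append_cons] at hlast ⊢

theorem IsCycle.exists_perm_isChain [DecidableRel G.Adj] {k : ℕ} (hind : IndepLE G k)
    (hc : c.IsCycle) (hx : x ∉ c.support) (hk : k ≤ #{w ∈ c.support.tail.toFinset | G.Adj x w}) :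
    ∃ P, P.Perm c.support.tail ∧ (x :: (P ++ [x])).IsChain G.Adj := by
  set L := c.support.tail
  set N : Finset V := {w ∈ L.toFinset | G.Adj x w}
  have hN : ∀ {w}, w ∈ N ↔ w ∈ L ∧ G.Adj x w := by simp [N]
  let σ : V → V := fun w => if h : w ∈ L then L.next w h else w
  have hσ : ∀ w (hw : w ∈ L), σ w = L.next w hw := fun w hw => dif_pos hw
  have hinj : Set.InjOn σ N := by
    intro a ha b hb hab
    rw [hσ a (hN.mp ha).1, hσ b (hN.mp hb).1] at hab
    rw [← L.prev_next hc.support_nodup a (hN.mp ha).1,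
      ← L.prev_next hc.support_nodup b (hN.mp hb).1]
    simp only [hab]
  have hxσ : x ∉ N.image σ := by
    intro h
    obtain ⟨w, hw, hxw⟩ := mem_image.mp h
    exact hx (List.mem_of_mem_tail (hxw ▸ hσ w (hN.mp hw).1 ▸ L.next_mem w (hN.mp hw).1))
  rcases hind.exists_adj_of_injOn hk hinj hxσ with ⟨a, ha, hxa'⟩ | ⟨a, ha, b, hb, hab, hnext⟩
  · rw [hN] at ha
    exact hc.exists_perm_isChain_of_adj_next ha.1 ha.2 (hσ a ha.1 ▸ hxa')
  · rw [hN] at ha hb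
    exact hc.exists_perm_isChain_of_adj_next_next ha.1 hb.1 hab ha.2 hb.2
      (hσ a ha.1 ▸ hσ b hb.1 ▸ hnext)

end Walk

end SimpleGraph

/-- If `α(G) ≤ k`, `C` is a cycle of `G`, and `x` is a vertex not on `C` with at
least `k` neighbors on `C`, then `G` has a cycle of length `|C| + 1` whose vertex
set is exactly the vertex set of `C` together with `x`.  (For a cycle walk `c`,
the number of vertices of the cycle equals `c.length`.) -/
theorem cycle_absorb_vertex {V : Type*} [DecidableEq V]
    (G : SimpleGraph V) [DecidableRel G.Adj] (k : ℕ) (hind : IndepLE G k)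
    {v : V} (c : G.Walk v v) (hc : c.IsCycle)
    (x : V) (hx : x ∉ c.support)
    (hnbrs : k ≤ (c.support.toFinset.filter (fun w => G.Adj x w)).card) :
    ∃ (u : V) (c' : G.Walk u u), c'.IsCycle ∧ c'.length = c.length + 1 ∧
      c'.support.toFinset = insert x c.support.toFinset := by
  have hsupp : c.support.toFinset = c.support.tail.toFinset := by
    nth_rw 1 [← c.cons_tail_support]
    rw [List.toFinset_cons, Finset.insert_eq_of_mem
      (List.mem_toFinset.mpr (c.end_mem_tail_support hc.not_nil))]
  obtain ⟨P, hP, hchain⟩ := hc.exists_perm_isChain hind hx (by rwa [hsupp] at hnbrs)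
  have hlen : P.length = c.length := by
    rw [hP.length_eq, List.length_tail, c.length_support, Nat.add_sub_cancel]
  obtain ⟨c', hc', hsupp'⟩ := SimpleGraph.exists_isCycle_support_eq
    (hP.nodup_iff.mpr hc.support_nodup) (fun h => hx (List.mem_of_mem_tail (hP.subset h)))
    (by have := hc.three_le_length; omega) hchain
  refine ⟨x, c', hc', ?_, ?_⟩
  · have := c'.length_support
    simp only [hsupp', List.length_cons, List.length_append, List.length_nil] at this
    omega
  · ext w
    simp [hsupp', hsupp, hP.mem_iff]
end

section
/- For every integer k ≥ 5 there exists a Hamiltonian graph G on exactly k(k−2) vertices with independence number α(G) = k that contains no cycle of length k − 1 (and hence is not pancyclic). Such a graph is obtained by taking k disjoint cliques K_1, …, K_k, each of size k − 2 with two distinguished vertices v_i, w_i ∈ K_i, and adding the edges {v_i, w_{i+1}} for all i (indices modulo k). -/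
/-!
Arrange `k` cliques of size `m + 1 = k - 2` in a cycle, clique `i` being joined to clique `i + 1`
by a single connector edge. Running through the cliques one after another is a Hamiltonian
cycle. An independent set meets every clique at most once, and the entry vertices of the cliques
form one of size `k`. Only two connectors leave a given clique, and a cycle leaves any vertex set
an even number of times; so a cycle that uses one connector uses all `k` of them and has length
at least `k`, while a cycle using none stays inside one clique and has length at most `k - 2`.
Hence there is no cycle of length `k - 1`.
-/

open SimpleGraph Finset

theorem Fin.one_ne_zero_of_two_le {k : ℕ} [NeZero k] (hk : 2 ≤ k) : (1 : Fin k) ≠ 0 := by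
  simp [Fin.ext_iff, Nat.mod_eq_of_lt (show 1 < k by omega)]

theorem List.Nodup.mem_iff_mem_of_even_countP {α : Type*} [DecidableEq α] {l : List α}
    (hl : l.Nodup) {a b : α} (hab : a ≠ b) (h : Even (l.countP fun x ↦ x = a ∨ x = b)) :
    a ∈ l ↔ b ∈ l := by
  have hsum : l.countP (fun x ↦ x = a ∨ x = b) = l.count a + l.count b := by
    clear hl h
    induction l with
    | nil => rfl
    | cons x l ih =>
      simp only [List.countP_cons, List.count_cons, ih]
      grind
  rw [hsum, Nat.even_add, Nat.even_iff, Nat.even_iff] at h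
  have ha := List.nodup_iff_count_le_one.1 hl a
  have hb := List.nodup_iff_count_le_one.1 hl b
  rw [← List.count_pos_iff, ← List.count_pos_iff]
  omega

namespace SimpleGraph

variable {V : Type*} {G : SimpleGraph V}

theorem isHamiltonian_cycleGraph {n : ℕ} (hn : 3 ≤ n) : (cycleGraph n).IsHamiltonian := by
  obtain ⟨n, rfl⟩ := Nat.exists_eq_add_of_le' hn
  exact fun _ ↦ ⟨0, cycleGraph.cycle n, Walk.isHamiltonianCycle_iff_isCycle_and_length_eq.2
    ⟨cycleGraph.isCycle_cycle, by simp [cycleGraph.length_cycle]⟩⟩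

theorem cycleGraph_le_of_forall_adj_add_one {n : ℕ} [NeZero n] {G : SimpleGraph (Fin n)}
    (h : ∀ t, G.Adj t (t + 1)) : cycleGraph n ≤ G := by
  intro a b hab
  have eq_one_of_val_eq_one (t : Fin n) (ht : t.val = 1) : t = 1 := by
    have : 1 < n := ht ▸ t.isLt
    ext
    simp [ht, Nat.mod_eq_of_lt this]
  rcases cycleGraph_adj'.1 hab with hab | hab
  · rw [← sub_add_cancel a b, eq_one_of_val_eq_one _ hab, add_comm]
    exact (h b).symm
  · rw [← sub_add_cancel b a, eq_one_of_val_eq_one _ hab, add_comm]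
    exact h a

theorem IsIndepSet.card_le_of_isClique_preimage {α : Type*} [Fintype α] {π : V → α}
    (hπ : ∀ a, G.IsClique (π ⁻¹' {a})) {s : Finset V} (hs : G.IsIndepSet s) :
    s.card ≤ Fintype.card α := by
  refine card_le_card_of_injOn π (fun _ _ ↦ mem_univ _) fun u hu v hv huv ↦ ?_
  by_contra hne
  exact hs hu hv hne (hπ (π v) huv rfl hne)

namespace Walk

theorem even_countP_darts_crossing_iff {u w : V} (p : G.Walk u w) (S : Set V)
    [DecidablePred (· ∈ S)] :
    Even (p.darts.countP fun d ↦ ¬(d.fst ∈ S ↔ d.snd ∈ S)) ↔ (u ∈ S ↔ w ∈ S) := by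
  induction p with
  | nil => simp
  | @cons x y _ _ p ih =>
    rw [darts_cons, List.countP_cons, Nat.even_add, ih]
    by_cases hx : x ∈ S <;> by_cases hy : y ∈ S <;> simp [hx, hy]

theorem apply_eq_of_forall_dart {α : Type*} {f : V → α} {u w : V} (p : G.Walk u w)
    (h : ∀ d ∈ p.darts, f d.fst = f d.snd) : ∀ x ∈ p.support, f x = f u := by
  induction p with
  | nil => simp
  | cons _ p ih =>
    simp only [darts_cons, List.mem_cons, forall_eq_or_imp] at h
    simp only [support_cons, List.mem_cons, forall_eq_or_imp, true_and]
    exact fun x hx ↦ (ih h.2 x hx).trans h.1.symm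

theorem IsCycle.length_le_card_of_support_subset [DecidableEq V] {u : V} {p : G.Walk u u}
    (hp : p.IsCycle) {s : Finset V} (hs : ∀ x ∈ p.support, x ∈ s) : p.length ≤ s.card :=
  calc p.length = p.support.tail.length := by simp [length_support]
    _ = p.support.tail.toFinset.card := (List.toFinset_card_of_nodup hp.support_nodup).symm
    _ ≤ s.card := card_le_card fun x hx ↦ hs x (List.mem_of_mem_tail (List.mem_toFinset.1 hx))

end Walk

end SimpleGraph

/-- Clique `i` is `{i} × Fin (m + 1)`; in the notation of the paper `w i = (i, 0)` and
`v i = (i, Fin.last m)`, and the connectors are the edges `v i w (i + 1)`. -/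
def cliqueCycle (k m : ℕ) [NeZero k] : SimpleGraph (Fin k × Fin (m + 1)) :=
  fromRel fun x y ↦ x.1 = y.1 ∨ (y.1 = x.1 + 1 ∧ x.2 = Fin.last m ∧ y.2 = 0)

namespace cliqueCycle

variable {k m : ℕ} [NeZero k]

def connector (i : Fin k) : Sym2 (Fin k × Fin (m + 1)) := s((i, Fin.last m), (i + 1, 0))

theorem adj_of_fst_eq {x y : Fin k × Fin (m + 1)} (hxy : x ≠ y) (h : x.1 = y.1) :
    (cliqueCycle k m).Adj x y :=
  ⟨hxy, .inl (.inl h)⟩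

theorem adj_connector (hm : 1 ≤ m) (i : Fin k) :
    (cliqueCycle k m).Adj (i, Fin.last m) (i + 1, 0) :=
  ⟨by simp [Prod.ext_iff, Fin.ext_iff]; omega, .inl (.inr ⟨rfl, rfl, rfl⟩)⟩

theorem not_adj_mk_zero (hm : 1 ≤ m) (i j : Fin k) : ¬(cliqueCycle k m).Adj (i, 0) (j, 0) := by
  rintro ⟨hne, (h | ⟨-, h, -⟩) | (h | ⟨-, h, -⟩)⟩ <;> simp_all [Fin.ext_iff] <;> omega

theorem connector_injective (hm : 1 ≤ m) : Function.Injective (connector (k := k) (m := m)) := by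
  intro i j h
  simp only [connector, Sym2.eq_iff, Prod.ext_iff, Fin.ext_iff, and_true, Fin.val_last,
    Fin.coe_ofNat_eq_mod, Nat.zero_mod] at h
  omega

theorem adj_finProdFinEquiv_symm_add_one (hm : 1 ≤ m) (t : Fin (k * (m + 1))) :
    (cliqueCycle k m).Adj (finProdFinEquiv.symm t) (finProdFinEquiv.symm (t + 1)) := by
  obtain ⟨⟨i, c⟩, rfl⟩ := finProdFinEquiv.surjective t
  rw [Equiv.symm_apply_apply]
  by_cases hc : c = Fin.last m
  · have : finProdFinEquiv (i, c) + 1 = finProdFinEquiv (i + 1, (0 : Fin (m + 1))) := by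
      ext
      simp only [Fin.val_add, finProdFinEquiv_apply_val, hc, Fin.val_last, Fin.coe_ofNat_eq_mod,
        Nat.add_mod_mod, Nat.zero_mod, zero_add]
      rw [show m + (m + 1) * i + 1 = (m + 1) * (i + 1) by ring, mul_comm k,
        Nat.mul_mod_mul_left]
    rw [this, Equiv.symm_apply_apply, hc]
    exact adj_connector hm i
  · have hc : c.val < m := Fin.val_lt_last hc
    have : finProdFinEquiv (i, c) + 1 = finProdFinEquiv (i, c + 1) := by
      have : (m + 1) * (i + 1) ≤ k * (m + 1) := mul_comm k (m + 1) ▸ Nat.mul_le_mul_left _ i.isLt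
      ext
      simp only [Fin.val_add, finProdFinEquiv_apply_val, Fin.coe_ofNat_eq_mod, Nat.add_mod_mod]
      rw [Nat.mod_eq_of_lt (by linarith), Nat.mod_eq_of_lt (by omega)]
      ring
    rw [this, Equiv.symm_apply_apply]
    exact adj_of_fst_eq (by simp [Fin.ext_iff]; omega) rfl

theorem not_fst_eq_iff_iff (hk : 2 ≤ k) (hm : 1 ≤ m) {x y : Fin k × Fin (m + 1)}
    (h : (cliqueCycle k m).Adj x y) (j : Fin k) :
    ¬(x.1 = j ↔ y.1 = j) ↔ s(x, y) = connector (j - 1) ∨ s(x, y) = connector j := by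
  have hsucc (i : Fin k) : i + 1 ≠ i := add_eq_left.not.2 (Fin.one_ne_zero_of_two_le hk)
  have hpred (i : Fin k) : i - 1 ≠ i := sub_eq_self.not.2 (Fin.one_ne_zero_of_two_le hk)
  have hlast : Fin.last m ≠ 0 := by simp [Fin.ext_iff]; omega
  obtain ⟨x1, x2⟩ := x
  obtain ⟨y1, y2⟩ := y
  obtain ⟨-, (h | ⟨h, hx, hy⟩) | (h | ⟨h, hy, hx⟩)⟩ := h <;>
    subst_vars <;> simp [connector] <;> grind [sub_add_cancel]

theorem connector_sub_one_mem_edges_iff (hk : 2 ≤ k) (hm : 1 ≤ m) {u : Fin k × Fin (m + 1)}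
    {p : (cliqueCycle k m).Walk u u} (hp : p.IsCycle) (j : Fin k) :
    connector (j - 1) ∈ p.edges ↔ connector j ∈ p.edges := by
  refine hp.edges_nodup.mem_iff_mem_of_even_countP
    ((connector_injective hm).ne (sub_eq_self.not.2 (Fin.one_ne_zero_of_two_le hk))) ?_
  have := (p.even_countP_darts_crossing_iff {x | x.1 = j}).2 Iff.rfl
  rw [Walk.edges, List.countP_map]
  convert this using 1
  refine List.countP_congr fun d _ ↦ ?_
  simp only [Function.comp_apply, decide_eq_true_iff]
  exact (not_fst_eq_iff_iff hk hm d.adj j).symm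

open Fin.NatCast in
theorem connector_mem_edges_of_mem (hk : 2 ≤ k) (hm : 1 ≤ m) {u : Fin k × Fin (m + 1)}
    {p : (cliqueCycle k m).Walk u u} (hp : p.IsCycle) {j : Fin k} (hj : connector j ∈ p.edges)
    (i : Fin k) : connector i ∈ p.edges := by
  have (n : ℕ) : connector (j + (n : Fin k)) ∈ p.edges := by
    induction n with
    | zero => simpa using hj
    | succ n ih =>
      rwa [Nat.cast_succ, ← add_assoc, ← connector_sub_one_mem_edges_iff hk hm hp,
        add_sub_cancel_right]
  simpa using this (i - j).val

theorem length_le_or_le_length_of_isCycle (hk : 2 ≤ k) (hm : 1 ≤ m) {u : Fin k × Fin (m + 1)}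
    {p : (cliqueCycle k m).Walk u u} (hp : p.IsCycle) : p.length ≤ m + 1 ∨ k ≤ p.length := by
  by_cases h : ∃ j, connector j ∈ p.edges
  · obtain ⟨j, hj⟩ := h
    right
    calc k = (univ.map ⟨connector, connector_injective hm⟩).card := by simp
      _ ≤ p.edges.toFinset.card := card_le_card fun e he ↦ by
        obtain ⟨i, -, rfl⟩ := mem_map.1 he
        exact List.mem_toFinset.2 (connector_mem_edges_of_mem hk hm hp hj i)
      _ = p.length := by rw [List.toFinset_card_of_nodup hp.edges_nodup, Walk.length_edges]
  · rw [not_exists] at h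
    left
    have hfst (d) (hd : d ∈ p.darts) : d.fst.1 = d.snd.1 := by
      by_contra hne
      have hd : d.edge ∈ p.edges := List.mem_map_of_mem hd
      rcases (not_fst_eq_iff_iff hk hm d.adj d.fst.1).1 (by simpa [eq_comm] using hne) with
        he | he <;> exact h _ (by rw [← he]; exact hd)
    calc p.length ≤ ({u.1} ×ˢ univ : Finset (Fin k × Fin (m + 1))).card :=
          hp.length_le_card_of_support_subset fun x hx ↦
            mem_product.2 ⟨mem_singleton.2 (p.apply_eq_of_forall_dart hfst x hx), mem_univ _⟩
      _ = m + 1 := by simp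

end cliqueCycle

/-- For every integer `k ≥ 5` there is a Hamiltonian graph on exactly `k(k-2)`
vertices with independence number exactly `k` containing no cycle of length `k - 1`
(hence not pancyclic). -/
theorem exists_hamiltonian_not_pancyclic (k : ℕ) (hk : 5 ≤ k) :
    ∃ G : SimpleGraph (Fin (k * (k - 2))),
      G.IsHamiltonian ∧
      (∀ s : Finset (Fin (k * (k - 2))),
        (∀ u ∈ s, ∀ v ∈ s, u ≠ v → ¬ G.Adj u v) → s.card ≤ k) ∧
      (∃ s : Finset (Fin (k * (k - 2))),
        (∀ u ∈ s, ∀ v ∈ s, u ≠ v → ¬ G.Adj u v) ∧ s.card = k) ∧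
      ¬ ∃ (v : Fin (k * (k - 2))) (cyc : G.Walk v v),
          cyc.IsCycle ∧ cyc.length = k - 1 := by
  obtain ⟨m, hm⟩ : ∃ m, k - 2 = m + 1 := ⟨k - 3, by omega⟩
  rw [hm]
  have : NeZero k := ⟨by omega⟩
  let e : Fin k × Fin (m + 1) ≃ Fin (k * (m + 1)) := finProdFinEquiv
  let φ : (cliqueCycle k m).comap e.symm →g cliqueCycle k m := ⟨e.symm, id⟩
  refine ⟨(cliqueCycle k m).comap e.symm, ?_, fun s hs ↦ ?_, ?_, ?_⟩
  · exact (isHamiltonian_cycleGraph (by nlinarith)).mono <| cycleGraph_le_of_forall_adj_add_one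
      (cliqueCycle.adj_finProdFinEquiv_symm_add_one (by omega))
  · simpa using IsIndepSet.card_le_of_isClique_preimage (π := fun t ↦ (e.symm t).1)
      (fun _ _ hx _ hy hxy ↦ cliqueCycle.adj_of_fst_eq (e.symm.injective.ne hxy) (hx.trans hy.symm))
      hs
  · refine ⟨univ.map ((Function.Embedding.sectL (Fin k) 0).trans e.toEmbedding), ?_, by simp⟩
    simp only [mem_map, mem_univ, true_and]
    rintro _ ⟨i, rfl⟩ _ ⟨j, rfl⟩ -
    simpa using cliqueCycle.not_adj_mk_zero (by omega) i j
  · rintro ⟨v, c, hc, hlen⟩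
    have := cliqueCycle.length_le_or_le_length_of_isCycle (by omega) (by omega)
      ((Walk.isCycle_map_iff_of_injective (f := φ) e.symm.injective).2 hc)
    rw [Walk.length_map] at this
    omega
end

section
/- Let f : ℕ → ℕ and suppose that for every positive integer k, every Hamiltonian graph on m ≥ f(k) vertices with independence number at most k contains a cycle of length m − 1. Then for every real constant C ≥ 1 and every positive integer k, every Hamiltonian graph G on n ≥ C·f(k) vertices with independence number α(G) ≤ k contains a cycle of length ℓ for every integer ℓ with n/C ≤ ℓ ≤ n. -/
open SimpleGraph

universe u

section

variable {V W : Type*} {G : SimpleGraph V} {H : SimpleGraph W} {k ℓ : ℕ}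

theorem IndepLE.of_embedding (φ : G ↪g H) (hH : IndepLE H k) : IndepLE G k := by
  classical
  intro s hs
  rw [← s.card_map φ.toEmbedding]
  refine hH _ ?_
  simp only [Finset.forall_mem_map]
  intro u hu v hv huv
  simpa using hs u hu v hv (ne_of_apply_ne _ huv)

theorem IndepLE.of_card_le [Fintype V] (h : Fintype.card V ≤ k) : IndepLE G k :=
  fun s _ => s.card_le_univ.trans h

namespace SimpleGraph

def HasCycleOfLength (G : SimpleGraph V) (ℓ : ℕ) : Prop :=
  ∃ (v : V) (c : G.Walk v v), c.IsCycle ∧ c.length = ℓ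

theorem HasCycleOfLength.map (φ : G ↪g H) (hG : G.HasCycleOfLength ℓ) :
    H.HasCycleOfLength ℓ := by
  obtain ⟨v, c, hc, rfl⟩ := hG
  exact ⟨φ v, c.map φ.toHom, hc.map φ.injective, c.length_map _⟩

theorem Iso.isHamiltonian [Fintype V] [Fintype W] [DecidableEq V] [DecidableEq W]
    (e : G ≃g H) (hG : G.IsHamiltonian) : H.IsHamiltonian := by
  intro hW
  obtain ⟨v, p, hp⟩ := hG (by rwa [e.card_eq])
  exact ⟨e v, p.map e.toHom, hp.map e.bijective⟩

namespace Walk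

variable [DecidableEq V] {v : V} {c : G.Walk v v}

theorem IsCycle.card_support_toFinset_s11 (hc : c.IsCycle) : c.support.toFinset.card = c.length := by
  rw [← c.cons_tail_support, List.toFinset_cons,
    Finset.insert_eq_of_mem (List.mem_toFinset.2 (c.end_mem_tail_support hc.not_nil)),
    List.toFinset_card_of_nodup hc.support_nodup, List.length_tail, length_support,
    Nat.add_sub_cancel]

theorem IsCycle.card_coe_support_toFinset (hc : c.IsCycle) :
    Fintype.card (c.support.toFinset : Set V) = c.length :=
  (Fintype.card_coe _).trans hc.card_support_toFinset_s11

theorem IsCycle.isHamiltonian_induce_support (hc : c.IsCycle) :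
    (G.induce (c.support.toFinset : Set V)).IsHamiltonian := by
  intro _
  have hmem : ∀ x ∈ c.support, x ∈ (c.support.toFinset : Set V) := by simp
  have hmap : (c.induce _ hmem).map (Embedding.induce _).toHom = c := map_induce c hmem
  refine ⟨_, c.induce _ hmem, isHamiltonianCycle_iff_isCycle_and_length_eq.2 ⟨?_, ?_⟩⟩
  · exact (isCycle_map_iff_of_injective (Embedding.induce (G := G) _).injective).1 (hmap ▸ hc)
  · rw [hc.card_coe_support_toFinset]
    exact (length_map _ _).symm.trans (congrArg length hmap)

end Walk

theorem hasCycleOfLength_card_sub_one_of_fin {m : ℕ}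
    (h : ∀ n, m ≤ n → ∀ G : SimpleGraph (Fin n), G.IsHamiltonian → IndepLE G k →
      G.HasCycleOfLength (n - 1))
    [Fintype V] [DecidableEq V] (hm : m ≤ Fintype.card V) (hG : G.IsHamiltonian)
    (hI : IndepLE G k) :
    G.HasCycleOfLength (Fintype.card V - 1) :=
  let e := G.overFinIso rfl
  (h _ hm _ (e.isHamiltonian hG) (hI.of_embedding e.symm.toEmbedding)).map e.symm.toEmbedding

end SimpleGraph

end

theorem SimpleGraph.hasCycleOfLength_of_hasCycleOfLength_card_sub_one {V : Type u}
    {G : SimpleGraph V} {k m ℓ : ℕ}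
    (h : ∀ {W : Type u} [Fintype W] [DecidableEq W] (H : SimpleGraph W),
      m ≤ Fintype.card W → H.IsHamiltonian → IndepLE H k →
      H.HasCycleOfLength (Fintype.card W - 1))
    (hm : 2 ≤ m) [Fintype V] [DecidableEq V] (hG : G.IsHamiltonian) (hI : IndepLE G k)
    (hmℓ : m ≤ ℓ) (hℓ : ℓ ≤ Fintype.card V) : G.HasCycleOfLength ℓ := by
  induction hn : Fintype.card V using Nat.strong_induction_on generalizing V with
  | _ n ih =>
  rcases hℓ.eq_or_lt with rfl | hlt
  · obtain ⟨v, c, hc⟩ := hG (by omega)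
    exact ⟨v, c, hc.isCycle, hc.length_eq⟩
  · obtain ⟨v, c, hc, hlen⟩ := h (W := V) G (by omega) hG hI
    have hcard : Fintype.card (c.support.toFinset : Set V) = n - 1 := by
      rw [hc.card_coe_support_toFinset, hlen, hn]
    exact (ih (n - 1) (by omega) hc.isHamiltonian_induce_support
      (hI.of_embedding (Embedding.induce _)) (by omega) hcard).map (Embedding.induce _)

/-- If for every positive `k` every Hamiltonian graph on `m ≥ f(k)` vertices with
independence number at most `k` contains a cycle of length `m - 1`, then for every
real `C ≥ 1`, every positive `k`, and every Hamiltonian graph `G` on `n ≥ C·f(k)`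
vertices with independence number at most `k`, `G` contains a cycle of length `ℓ`
for every integer `n/C ≤ ℓ ≤ n`. -/
theorem linear_cycles_of_cycle_sub_one (f : ℕ → ℕ)
    (hf : ∀ k : ℕ, 0 < k → ∀ m : ℕ, f k ≤ m →
      ∀ G : SimpleGraph (Fin m), G.IsHamiltonian → IndepLE G k →
      ∃ (v : Fin m) (cyc : G.Walk v v), cyc.IsCycle ∧ cyc.length = m - 1) :
    ∀ C : ℝ, 1 ≤ C → ∀ k : ℕ, 0 < k → ∀ n : ℕ,
      C * (f k : ℝ) ≤ (n : ℝ) →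
      ∀ G : SimpleGraph (Fin n), G.IsHamiltonian → IndepLE G k →
      ∀ ℓ : ℕ, (n : ℝ) / C ≤ (ℓ : ℝ) → ℓ ≤ n →
      ∃ (v : Fin n) (cyc : G.Walk v v), cyc.IsCycle ∧ cyc.length = ℓ := by
  intro C hC k hk n hn G hG hI ℓ hnℓ hℓn
  have hfk : 2 ≤ f k := by
    by_contra! hfk
    obtain ⟨v, c, hc, hlen⟩ := hf k hk 1 (by omega) ⊥ (IsHamiltonian.of_card_eq_one (by simp))
      (IndepLE.of_card_le (by rw [Fintype.card_fin]; exact hk))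
    have := hc.three_le_length
    omega
  have hfkℓ : f k ≤ ℓ := by
    have hfkn : (f k : ℝ) ≤ n / C := (le_div_iff₀' (one_pos.trans_le hC)).2 hn
    exact_mod_cast hfkn.trans hnℓ
  exact hasCycleOfLength_of_hasCycleOfLength_card_sub_one
    (fun H hm => hasCycleOfLength_card_sub_one_of_fin (hf k hk) hm) hfk hG hI hfkℓ
    (by simpa using hℓn)
end

section
/- Let G be a graph on n vertices with independence number α(G) ≤ k, and let d be a positive integer. Then G contains an induced subgraph on at least n − k·d vertices whose minimum degree is at least d. -/
/-!
Repeatedly delete a vertex `v` having fewer than `d` neighbours among the remaining vertices,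
together with those neighbours: at most `d` vertices per step. The deleted centres `v` form an
independent set, since each later centre survived the deletion of all neighbours of the earlier
ones; hence there are at most `k` steps, and what remains has minimum degree at least `d`.
-/

open Finset

namespace SimpleGraph

variable {V : Type*} (G : SimpleGraph V)

def IndepLEOn (s : Finset V) (k : ℕ) : Prop :=
  ∀ t ⊆ s, G.IsIndepSet (t : Set V) → #t ≤ k

variable {G} {s : Finset V} {k d : ℕ}

lemma IndepLEOn.eq_empty_of_zero (h : G.IndepLEOn s 0) : s = ∅ := by
  by_contra hs
  obtain ⟨v, hv⟩ := nonempty_iff_ne_empty.mpr hs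
  simpa using h {v} (by simpa using hv) (by simp)

variable [DecidableEq V] [DecidableRel G.Adj]

lemma IndepLEOn.sdiff_insert_neighbors {v : V} (h : G.IndepLEOn s (k + 1)) (hv : v ∈ s) :
    G.IndepLEOn (s \ insert v (s.filter (G.Adj v))) k := by
  intro t hts ht
  have hvt : v ∉ t := fun hvt => (mem_sdiff.mp (hts hvt)).2 (mem_insert_self _ _)
  have hnadj : ∀ u ∈ t, ¬G.Adj v u := fun u hu hadj => by
    obtain ⟨hus, huR⟩ := mem_sdiff.mp (hts hu)
    exact huR (mem_insert_of_mem (mem_filter.mpr ⟨hus, hadj⟩))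
  have hins : G.IsIndepSet (insert v t : Finset V) := by
    rw [coe_insert]
    exact ht.insert fun u hu _ => ⟨hnadj u hu, fun hadj => hnadj u hu hadj.symm⟩
  have := h (insert v t) (insert_subset hv (hts.trans sdiff_subset)) hins
  rw [card_insert_of_notMem hvt] at this
  omega

theorem IndepLEOn.exists_subset_le_degree (h : G.IndepLEOn s k) :
    ∃ t ⊆ s, #s - k * d ≤ #t ∧ ∀ v ∈ t, d ≤ #(t.filter (G.Adj v)) := by
  induction s using Finset.strongInduction generalizing k with
  | H s ih =>
    by_cases hgood : ∀ v ∈ s, d ≤ #(s.filter (G.Adj v))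
    · exact ⟨s, Subset.refl _, Nat.sub_le _ _, hgood⟩
    push Not at hgood
    obtain ⟨v, hv, hlow⟩ := hgood
    obtain _ | k := k
    · simp [h.eq_empty_of_zero] at hv
    set R := insert v (s.filter (G.Adj v))
    have hRs : R ⊆ s := insert_subset hv (filter_subset _ _)
    have hR : #R ≤ d := (card_insert_le _ _).trans hlow
    have hsub : s \ R ⊂ s := sdiff_ssubset hRs (insert_nonempty _ _)
    obtain ⟨t, hts, hcard, hdeg⟩ := ih _ hsub (h.sdiff_insert_neighbors hv)
    refine ⟨t, hts.trans sdiff_subset, ?_, hdeg⟩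
    rw [card_sdiff_of_subset hRs] at hcard
    have : (k + 1) * d = k * d + d := by ring
    omega

end SimpleGraph

theorem induced_subgraph_min_degree_general {V : Type*} [Fintype V]
    (G : SimpleGraph V) [DecidableRel G.Adj] (n k d : ℕ)
    (hn : Fintype.card V = n) (hind : IndepLE G k) :
    ∃ s : Finset V, n - k * d ≤ s.card ∧
      ∀ v ∈ s, d ≤ (s.filter (fun u => G.Adj v u)).card := by
  classical
  obtain ⟨s, -, hcard, hdeg⟩ :=
    SimpleGraph.IndepLEOn.exists_subset_le_degree (d := d) (s := univ) fun t _ ht => hind t ht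
  exact ⟨s, by rwa [card_univ, hn] at hcard, hdeg⟩

/-- If `G` is a graph on `n` vertices with `α(G) ≤ k` and `d` is a positive integer,
then `G` contains an induced subgraph on at least `n - k·d` vertices all of whose
vertices have at least `d` neighbors inside it (i.e. with minimum degree ≥ `d`). -/
theorem induced_subgraph_min_degree {V : Type*} [Fintype V] [DecidableEq V]
    (G : SimpleGraph V) [DecidableRel G.Adj] (n k d : ℕ)
    (hn : Fintype.card V = n) (hind : IndepLE G k) (hd : 0 < d) :
    ∃ s : Finset V, n - k * d ≤ s.card ∧
      ∀ v ∈ s, d ≤ (s.filter (fun u => G.Adj v u)).card :=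
  induced_subgraph_min_degree_general G n k d hn hind
end

section
/- Let G be a graph on n vertices with a Hamilton cycle v_0, v_1, …, v_{n−1}, v_0, and let a, b, c, d be indices with 0 ≤ a < b < c < d ≤ n − 1 such that {v_a, v_c} and {v_b, v_d} are edges of G. Then G contains a cycle of length n − (b − a − 1) − (d − c − 1); in particular, this cycle contains all vertices of G except those v_i with a < i < b or c < i < d. -/
/-!
Walk from `v_d` along the Hamilton cycle, through `v_{n-1}` and `v_0`, to `v_a`, take the chord
to `v_c`, walk backwards along the Hamilton cycle to `v_b`, and close with the chord back to `v_d`.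
The two arcs `v_d … v_a` and `v_b … v_c` are disjoint because the chords cross, so this is a
cycle, and it misses exactly the interior vertices of the arcs `v_a … v_b` and `v_c … v_d`.
-/

open SimpleGraph Walk
open Fin.NatCast

lemma Fin.val_sub_eq_ite {n : ℕ} (x i : Fin n) :
    (x - i).val = if i.val ≤ x.val then x.val - i.val else n + x.val - i.val := by
  split_ifs with h
  · exact Fin.coe_sub_iff_le.mpr h
  · exact Fin.coe_sub_iff_lt.mpr (not_le.mp h)

namespace SimpleGraph

theorem Walk.isCycle_cons_append_cons {V : Type*} {G : SimpleGraph V} {a b c d : V}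
    {p : G.Walk d a} {q : G.Walk c b} (hp : p.IsPath) (hq : q.IsPath)
    (hpq : p.support.Disjoint q.support) (hac : G.Adj a c) (hbd : G.Adj b d) (hbc : b ≠ c) :
    (cons hbd (p.append (cons hac q))).IsCycle := by
  have hb : b ∉ p.support := fun hb => hpq hb q.end_mem_support
  have hd : d ∉ q.support := fun hd => hpq p.start_mem_support hd
  rw [cons_isCycle_iff]
  constructor
  · rw [isPath_def, support_append, support_cons, List.tail_cons, List.nodup_append]
    exact ⟨hp.support_nodup, hq.support_nodup, fun x hx y hy hxy => hpq hx (hxy ▸ hy)⟩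
  · rw [edges_append, edges_cons, List.mem_append, List.mem_cons, Sym2.eq_iff]
    rintro (hbdp | (⟨rfl, rfl⟩ | ⟨rfl, rfl⟩) | hbdq)
    · exact hb (p.fst_mem_support_of_mem_edges hbdp)
    · exact hpq p.end_mem_support q.end_mem_support
    · exact hbc rfl
    · exact hd (q.snd_mem_support_of_mem_edges hbdq)

section HamiltonCycle

variable {n : ℕ} [NeZero n] {G : SimpleGraph (Fin n)} (h : ∀ i : Fin n, G.Adj i (i + 1))

def forwardWalk (i : Fin n) : (k : ℕ) → G.Walk i (i + k)
  | 0 => nil.copy rfl (by simp)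
  | k + 1 => (cons (h i) (forwardWalk (i + 1) k)).copy rfl (by push_cast; abel)

lemma forwardWalk_length (i : Fin n) (k : ℕ) : (forwardWalk h i k).length = k := by
  induction k generalizing i with
  | zero => simp [forwardWalk]
  | succ k ih => simp [forwardWalk, ih]

lemma forwardWalk_support (i : Fin n) (k : ℕ) :
    (forwardWalk h i k).support = (List.range (k + 1)).map (fun m : ℕ => i + m) := by
  induction k generalizing i with
  | zero => simp [forwardWalk]
  | succ k ih =>
    rw [List.range_succ_eq_map]
    simp only [forwardWalk, support_copy, support_cons, ih, List.map_cons, List.map_map]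
    congr 1
    · simp
    · refine List.map_congr_left fun m _ => ?_
      simp only [Function.comp_apply]
      push_cast
      abel

lemma forwardWalk_support_nodup (i : Fin n) {k : ℕ} (hk : k < n) :
    (forwardWalk h i k).support.Nodup := by
  rw [forwardWalk_support]
  refine List.Nodup.map_on (fun m hm m' hm' hmm' => ?_) List.nodup_range
  rw [List.mem_range] at hm hm'
  have := congrArg Fin.val (add_left_cancel hmm')
  rwa [Fin.val_natCast, Fin.val_natCast, Nat.mod_eq_of_lt (by omega),
    Nat.mod_eq_of_lt (by omega)] at this

def arc (i j : Fin n) : G.Walk i j :=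
  (forwardWalk h i (j - i).val).copy rfl (by simp)

lemma arc_length (i j : Fin n) : (arc h i j).length = (j - i).val := by
  simp [arc, forwardWalk_length]

lemma arc_isPath (i j : Fin n) : (arc h i j).IsPath := by
  rw [isPath_def, arc, support_copy]
  exact forwardWalk_support_nodup h i (j - i).isLt

lemma mem_support_arc_iff {i j x : Fin n} :
    x ∈ (arc h i j).support ↔ (x - i).val ≤ (j - i).val := by
  rw [arc, support_copy, forwardWalk_support, List.mem_map]
  constructor
  · rintro ⟨m, hm, rfl⟩
    rw [List.mem_range] at hm
    rw [add_sub_cancel_left, Fin.val_natCast]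
    exact (Nat.mod_le m n).trans (by omega)
  · intro hx
    exact ⟨(x - i).val, List.mem_range.mpr (by omega), by simp⟩

lemma mem_support_arc_of_le {i j x : Fin n} (hij : i ≤ j) :
    x ∈ (arc h i j).support ↔ i ≤ x ∧ x ≤ j := by
  rw [Fin.le_def] at hij
  rw [mem_support_arc_iff, Fin.val_sub_eq_ite, Fin.val_sub_eq_ite, if_pos hij]
  simp only [Fin.le_def]
  split_ifs <;> omega

lemma mem_support_arc_of_lt {i j x : Fin n} (hji : j < i) :
    x ∈ (arc h i j).support ↔ i ≤ x ∨ x ≤ j := by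
  rw [Fin.lt_def] at hji
  rw [mem_support_arc_iff, Fin.val_sub_eq_ite, Fin.val_sub_eq_ite, if_neg (not_le.mpr hji)]
  simp only [Fin.le_def]
  have := x.isLt
  split_ifs <;> omega

end HamiltonCycle

end SimpleGraph

/-- Let `G` be a graph on `n` vertices whose vertices are labeled `0, …, n-1` along a
Hamilton cycle (so `i` is adjacent to `i+1` mod `n` for every `i`).  If
`a < b < c < d` are indices with `{v_a, v_c}` and `{v_b, v_d}` edges of `G`, then `G`
contains a cycle of length `n - (b-a-1) - (d-c-1)` whose vertex set consists of all
vertices except those `i` with `a < i < b` or `c < i < d`. -/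
theorem cycle_of_two_crossing_chords {n : ℕ} [NeZero n]
    (G : SimpleGraph (Fin n)) (hham : ∀ i : Fin n, G.Adj i (i + 1))
    (a b c d : Fin n) (hab : a < b) (hbc : b < c) (hcd : c < d)
    (hac : G.Adj a c) (hbd : G.Adj b d) :
    ∃ (u : Fin n) (cyc : G.Walk u u), cyc.IsCycle ∧
      cyc.length = n - ((b : ℕ) - (a : ℕ) - 1) - ((d : ℕ) - (c : ℕ) - 1) ∧
      cyc.support.toFinset =
        Finset.univ.filter (fun i : Fin n =>
          ¬ ((a < i ∧ i < b) ∨ (c < i ∧ i < d))) := by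
  have hda : a < d := hab.trans (hbc.trans hcd)
  have mem_p (x : Fin n) : x ∈ (arc hham d a).support ↔ d ≤ x ∨ x ≤ a :=
    mem_support_arc_of_lt hham hda
  have mem_q (x : Fin n) : x ∈ (arc hham b c).reverse.support ↔ b ≤ x ∧ x ≤ c := by
    rw [support_reverse, List.mem_reverse, mem_support_arc_of_le hham hbc.le]
  simp only [Fin.lt_def, Fin.le_def] at hab hbc hcd hda mem_p mem_q
  refine ⟨b, cons hbd ((arc hham d a).append (cons hac (arc hham b c).reverse)), ?_, ?_, ?_⟩
  · refine isCycle_cons_append_cons (arc_isPath hham d a) (arc_isPath hham b c).reverse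
      (fun x hp hq => ?_) hac hbd (Fin.ne_of_lt hbc)
    have := (mem_p x).mp hp
    have := (mem_q x).mp hq
    omega
  · rw [length_cons, length_append, length_cons, length_reverse, arc_length, arc_length,
      Fin.val_sub_eq_ite, Fin.val_sub_eq_ite, if_neg (not_le.mpr hda), if_pos hbc.le]
    omega
  · ext x
    simp only [List.mem_toFinset, Finset.mem_filter, Finset.mem_univ, true_and, support_cons,
      support_append, List.tail_cons, List.mem_cons, List.mem_append, mem_p, mem_q,
      Fin.lt_def, Fin.ext_iff]
    have := x.isLt
    omega
end

section
/- Let G be a graph on n vertices with a Hamilton cycle v_0, v_1, …, v_{n−1}, v_0, and let a_1 < a_2 < b_1 < b_2 < c_1 < c_2 be indices in {0, …, n−1} such that {v_{a_1}, v_{b_1}}, {v_{a_2}, v_{c_1}}, and {v_{b_2}, v_{c_2}} are edges of G. Then G contains a cycle of length n − (a_2 − a_1 − 1) − (b_2 − b_1 − 1) − (c_2 − c_1 − 1); in particular, this cycle contains all vertices of G except those v_i with a_1 < i < a_2 or b_1 < i < b_2 or c_1 < i < c_2. -/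
/-!
Follow the chord `a₁b₁`, walk back along the Hamilton cycle from `b₁` to `a₂`, take the chord
`a₂c₁`, walk back from `c₁` to `b₂`, take the chord `b₂c₂`, and walk forward from `c₂` through
`n - 1` and `0` to `a₁`. The three arcs `[a₂, b₁]`, `[b₂, c₁]` and `[c₂, a₁]` of the Hamilton cycle
are pairwise disjoint and together cover everything outside the three open intervals, so this
closed walk is a cycle of the required length and vertex set.
-/

open Fin.CommRing

namespace SimpleGraph

variable {V : Type*} {G : SimpleGraph V}

theorem Walk.IsPath.append_cons {u v w x : V} {p : G.Walk u v} {q : G.Walk w x}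
    (hp : p.IsPath) (hq : q.IsPath) (h : G.Adj v w) (hpq : ∀ y ∈ p.support, y ∉ q.support) :
    (p.append (.cons h q)).IsPath := by
  refine .mk' ?_
  rw [Walk.support_append, Walk.support_cons, List.tail_cons, List.nodup_append]
  exact ⟨hp.support_nodup, hq.support_nodup, fun y hy _ hz hyz => hpq y hy (hyz ▸ hz)⟩

section succWalk

variable [AddMonoidWithOne V] (hG : ∀ v, G.Adj v (v + 1))

def succWalk (x : V) : (k : ℕ) → G.Walk x (x + k)
  | 0 => Walk.nil.copy rfl (by simp)
  | k + 1 => ((succWalk x k).concat (hG _)).copy rfl (by rw [Nat.cast_succ, add_assoc])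

@[simp]
theorem length_succWalk (x : V) (k : ℕ) : (succWalk hG x k).length = k := by
  induction k with
  | zero => simp [succWalk]
  | succ k ih => simp [succWalk, ih]

theorem support_succWalk (x : V) (k : ℕ) :
    (succWalk hG x k).support = (List.range (k + 1)).map fun j : ℕ => x + j := by
  induction k with
  | zero => simp [succWalk]
  | succ k ih =>
    rw [succWalk, Walk.support_copy, Walk.support_concat, ih, List.range_succ (n := k + 1),
      List.map_append]
    simp [add_assoc]

end succWalk

section Fin

variable {n : ℕ} [NeZero n] {G : SimpleGraph (Fin n)} (hG : ∀ i : Fin n, G.Adj i (i + 1))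

def succWalkTo (x y : Fin n) : G.Walk x y :=
  (succWalk hG x (y - x : Fin n)).copy rfl (by simp)

@[simp]
theorem length_succWalkTo (x y : Fin n) : (succWalkTo hG x y).length = (y - x : Fin n) := by
  simp [succWalkTo]

theorem mem_support_succWalkTo_iff {x y i : Fin n} :
    i ∈ (succWalkTo hG x y).support ↔ ((i - x : Fin n) : ℕ) ≤ (y - x : Fin n) := by
  have key : ∀ j < n, x + (j : Fin n) = i ↔ j = (i - x : Fin n) := fun j hj => by
    rw [← eq_sub_iff_add_eq', Fin.ext_iff, Fin.val_natCast, Nat.mod_eq_of_lt hj]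
  simp only [succWalkTo, Walk.support_copy, support_succWalk, List.mem_map, List.mem_range]
  constructor
  · rintro ⟨j, hj, hji⟩
    have := (y - x).isLt
    rw [key j (by omega)] at hji
    omega
  · intro h
    exact ⟨_, Nat.lt_succ_of_le h, (key _ (i - x).isLt).2 rfl⟩

theorem isPath_succWalkTo (x y : Fin n) : (succWalkTo hG x y).IsPath := by
  refine .mk' ?_
  rw [succWalkTo, Walk.support_copy, support_succWalk]
  refine List.nodup_range.map_on fun j hj k hk hjk => ?_
  have := (y - x).isLt
  rw [List.mem_range] at hj hk
  rwa [add_left_cancel_iff, Fin.ext_iff, Fin.val_natCast, Fin.val_natCast,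
    Nat.mod_eq_of_lt (by omega), Nat.mod_eq_of_lt (by omega)] at hjk

theorem mem_support_succWalkTo_of_le {x y i : Fin n} (hxy : x ≤ y) :
    i ∈ (succWalkTo hG x y).support ↔ x ≤ i ∧ i ≤ y := by
  rw [mem_support_succWalkTo_iff, Fin.sub_val_of_le hxy]
  rcases le_or_gt x i with hxi | hix
  · rw [Fin.sub_val_of_le hxi]
    omega
  · rw [Fin.coe_sub_iff_lt.2 hix]
    omega

theorem mem_support_succWalkTo_of_lt {x y i : Fin n} (hyx : y < x) :
    i ∈ (succWalkTo hG x y).support ↔ x ≤ i ∨ i ≤ y := by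
  rw [mem_support_succWalkTo_iff, Fin.coe_sub_iff_lt.2 hyx]
  rcases le_or_gt x i with hxi | hix
  · rw [Fin.sub_val_of_le hxi]
    omega
  · rw [Fin.coe_sub_iff_lt.2 hix]
    omega

end Fin

end SimpleGraph

open SimpleGraph

/-- Let `G` be a graph on `n` vertices whose vertices are labeled `0, …, n-1` along a
Hamilton cycle (so `i` is adjacent to `i+1` mod `n` for every `i`).  If
`a₁ < a₂ < b₁ < b₂ < c₁ < c₂` are indices with `{v_{a₁}, v_{b₁}}`, `{v_{a₂}, v_{c₁}}`
and `{v_{b₂}, v_{c₂}}` edges of `G`, then `G` contains a cycle of length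
`n - (a₂-a₁-1) - (b₂-b₁-1) - (c₂-c₁-1)` whose vertex set consists of all vertices
except those `i` with `a₁ < i < a₂`, `b₁ < i < b₂` or `c₁ < i < c₂`. -/
theorem cycle_of_semi_triangle {n : ℕ} [NeZero n]
    (G : SimpleGraph (Fin n)) (hham : ∀ i : Fin n, G.Adj i (i + 1))
    (a₁ a₂ b₁ b₂ c₁ c₂ : Fin n)
    (h₁ : a₁ < a₂) (h₂ : a₂ < b₁) (h₃ : b₁ < b₂) (h₄ : b₂ < c₁) (h₅ : c₁ < c₂)
    (e₁ : G.Adj a₁ b₁) (e₂ : G.Adj a₂ c₁) (e₃ : G.Adj b₂ c₂) :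
    ∃ (u : Fin n) (cyc : G.Walk u u), cyc.IsCycle ∧
      cyc.length =
        n - ((a₂ : ℕ) - (a₁ : ℕ) - 1) - ((b₂ : ℕ) - (b₁ : ℕ) - 1)
          - ((c₂ : ℕ) - (c₁ : ℕ) - 1) ∧
      cyc.support.toFinset =
        Finset.univ.filter (fun i : Fin n =>
          ¬ ((a₁ < i ∧ i < a₂) ∨ (b₁ < i ∧ i < b₂) ∨ (c₁ < i ∧ i < c₂))) := by
  have hA := fun i => mem_support_succWalkTo_of_le hham (i := i) h₂.le
  have hB := fun i => mem_support_succWalkTo_of_le hham (i := i) h₄.le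
  have hac : a₁ < c₂ := h₁.trans <| h₂.trans <| h₃.trans <| h₄.trans h₅
  have hC := fun i => mem_support_succWalkTo_of_lt hham (i := i) hac
  let tail : G.Walk b₁ a₁ := (succWalkTo hham a₂ b₁).reverse.append <| .cons e₂ <|
    (succWalkTo hham b₂ c₁).reverse.append <| .cons e₃ (succWalkTo hham c₂ a₁)
  have htail : tail.IsPath := by
    refine (isPath_succWalkTo hham _ _).reverse.append_cons
      ((isPath_succWalkTo hham _ _).reverse.append_cons (isPath_succWalkTo hham _ _) e₃ ?_) e₂ ?_
    all_goals
      simp only [Walk.support_reverse, List.mem_reverse, Walk.support_append, Walk.support_cons,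
        List.tail_cons, List.mem_append, hA, hB, hC]
      omega
  refine ⟨a₁, .cons e₁ tail, ?_, ?_, ?_⟩
  · exact Walk.isCycle_iff_isPath_tail_and_le_length.2 ⟨by simpa using htail, by simp [tail]; omega⟩
  · simp only [tail, Walk.length_cons, Walk.length_append, Walk.length_reverse,
      length_succWalkTo, Fin.sub_val_of_le h₂.le, Fin.sub_val_of_le h₄.le, Fin.coe_sub_iff_lt.2 hac]
    omega
  · ext i
    simp only [tail, List.mem_toFinset, Walk.support_cons, Walk.support_reverse, List.mem_cons,
      Walk.support_append, List.tail_cons, List.mem_append, List.mem_reverse, hA, hB, hC,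
      Finset.mem_filter, Finset.mem_univ, true_and]
    omega
end

section
/- Let G be a graph on n vertices with a Hamilton cycle v_0, v_1, …, v_{n−1}, v_0, and let a_1 < a_2 < b_1 < b_2 < c_1 < c_2 < d_1 < d_2 be indices in {0, …, n−1} such that {v_{a_1}, v_{c_2}}, {v_{a_2}, v_{c_1}}, {v_{b_1}, v_{d_2}}, and {v_{b_2}, v_{d_1}} are edges of G. Then G contains a cycle of length n − (a_2 − a_1 − 1) − (b_2 − b_1 − 1) − (c_2 − c_1 − 1) − (d_2 − d_1 − 1); in particular, this cycle contains all vertices of G except those v_i with a_1 < i < a_2 or b_1 < i < b_2 or c_1 < i < c_2 or d_1 < i < d_2. -/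
/-!
Follow the Hamilton cycle from `c₂` to `d₁`, take the chord to `b₂`, follow the cycle to `c₁`,
take the chord to `a₂`, follow the cycle to `b₁`, take the chord to `d₂`, follow the cycle
(through `0`) to `a₁`, and close up with the chord `a₁c₂`. This closed walk visits exactly the
vertices outside the four gaps, and it has as many edges as there are such vertices, so no
vertex is visited twice and the walk is a cycle.
-/

open Finset Fin.NatCast Fin.CommRing

namespace SimpleGraph.Walk

variable {V : Type*} {G : SimpleGraph V} {u v : V}

lemma isPath_of_length_lt_card_support_toFinset [DecidableEq V] {p : G.Walk u v}
    (h : p.length < #p.support.toFinset) : p.IsPath := by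
  have hcard : #(p.support : Multiset V).toFinset = Multiset.card (p.support : Multiset V) :=
    le_antisymm (List.toFinset_card_le _) (by rw [Multiset.coe_card, length_support]; exact h)
  exact .mk' (Multiset.toFinset_card_eq_card_iff_nodup.mp hcard)

lemma IsPath.isCycle_cons {p : G.Walk v u} (hp : p.IsPath) (h : G.Adj u v)
    (hl : 1 < p.length) : (cons h p).IsCycle :=
  (cons_isCycle_iff p h).mpr ⟨hp, fun he =>
    hl.ne' (hp.length_eq_one_of_mem_edges (Sym2.eq_swap ▸ he))⟩

end SimpleGraph.Walk

namespace SimpleGraph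

variable {n : ℕ} [NeZero n] {G : SimpleGraph (Fin n)} (hG : ∀ i : Fin n, G.Adj i (i + 1))

def hamArc : (i : Fin n) → (k : ℕ) → G.Walk i (i + k)
  | i, 0 => Walk.nil.copy rfl (by simp)
  | i, k + 1 => (Walk.cons (hG i) (hamArc (i + 1) k)).copy rfl (by push_cast; ring)

lemma length_hamArc (i : Fin n) (k : ℕ) : (hamArc hG i k).length = k := by
  induction k generalizing i with
  | zero => simp [hamArc]
  | succ k ih => simp [hamArc, ih]

lemma mem_support_hamArc_iff {i v : Fin n} {k : ℕ} :
    v ∈ (hamArc hG i k).support ↔ ∃ m ≤ k, i + m = v := by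
  induction k generalizing i with
  | zero => simp [hamArc, eq_comm]
  | succ k ih =>
    simp only [hamArc, Walk.support_copy, Walk.support_cons, List.mem_cons, ih]
    constructor
    · rintro (rfl | ⟨m, hm, rfl⟩)
      · exact ⟨0, by simp⟩
      · exact ⟨m + 1, by omega, by push_cast; ring⟩
    · rintro ⟨_ | m, hm, rfl⟩
      · simp
      · exact Or.inr ⟨m, by omega, by push_cast; ring⟩

def hamArcTo (i j : Fin n) : G.Walk i j :=
  (hamArc hG i (j - i : Fin n)).copy rfl (by simp)

lemma length_hamArcTo (i j : Fin n) : (hamArcTo hG i j).length = ((j - i : Fin n) : ℕ) := by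
  simp [hamArcTo, length_hamArc]

lemma mem_support_hamArcTo_iff {i j v : Fin n} :
    v ∈ (hamArcTo hG i j).support ↔ ((v - i : Fin n) : ℕ) ≤ ((j - i : Fin n) : ℕ) := by
  rw [hamArcTo, Walk.support_copy, mem_support_hamArc_iff]
  constructor
  · rintro ⟨m, hm, rfl⟩
    rwa [add_sub_cancel_left, Fin.val_cast_of_lt (hm.trans_lt (Fin.is_lt _))]
  · exact fun h => ⟨_, h, by simp⟩

lemma mem_support_hamArcTo_of_le {i j v : Fin n} (hij : i ≤ j) :
    v ∈ (hamArcTo hG i j).support ↔ i ≤ v ∧ v ≤ j := by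
  rw [mem_support_hamArcTo_iff, Fin.coe_sub_iff_le.mpr hij]
  rcases le_or_gt i v with hiv | hvi
  · rw [Fin.coe_sub_iff_le.mpr hiv]; simp only [Fin.le_def] at *; omega
  · rw [Fin.coe_sub_iff_lt.mpr hvi]; simp only [Fin.le_def, Fin.lt_def] at *; omega

lemma mem_support_hamArcTo_of_lt {i j v : Fin n} (hji : j < i) :
    v ∈ (hamArcTo hG i j).support ↔ i ≤ v ∨ v ≤ j := by
  rw [mem_support_hamArcTo_iff, Fin.coe_sub_iff_lt.mpr hji]
  rcases le_or_gt i v with hiv | hvi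
  · rw [Fin.coe_sub_iff_le.mpr hiv]; simp only [Fin.le_def, Fin.lt_def] at *; omega
  · rw [Fin.coe_sub_iff_lt.mpr hvi]; simp only [Fin.le_def, Fin.lt_def] at *; omega

end SimpleGraph

lemma card_filter_not_mem_four_Ioo {n : ℕ} {a₁ a₂ b₁ b₂ c₁ c₂ d₁ d₂ : Fin n}
    (hab : a₂ ≤ b₁) (hb : b₁ ≤ b₂) (hbc : b₂ ≤ c₁) (hc : c₁ ≤ c₂) (hcd : c₂ ≤ d₁) :
    #{i | ¬((a₁ < i ∧ i < a₂) ∨ (b₁ < i ∧ i < b₂) ∨ (c₁ < i ∧ i < c₂) ∨ (d₁ < i ∧ i < d₂))} =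
      n - ((a₂ : ℕ) - a₁ - 1) - ((b₂ : ℕ) - b₁ - 1) - ((c₂ : ℕ) - c₁ - 1) - ((d₂ : ℕ) - d₁ - 1) := by
  rw [filter_not, card_sdiff_of_subset (filter_subset _ _), card_univ, Fintype.card_fin,
    filter_or, filter_or, filter_or, filter_lt_lt_eq_Ioo, filter_lt_lt_eq_Ioo,
    filter_lt_lt_eq_Ioo, filter_lt_lt_eq_Ioo, card_union_of_disjoint, card_union_of_disjoint,
    card_union_of_disjoint, Fin.card_Ioo, Fin.card_Ioo, Fin.card_Ioo, Fin.card_Ioo]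
  · omega
  all_goals
    refine disjoint_left.mpr fun x hs ht => ?_
    simp only [mem_union, mem_Ioo, Fin.lt_def, Fin.le_def] at *
    omega

open SimpleGraph in
/-- Let `G` be a graph on `n` vertices whose vertices are labeled `0, …, n-1` along a
Hamilton cycle (so `i` is adjacent to `i+1` mod `n` for every `i`).  If
`a₁ < a₂ < b₁ < b₂ < c₁ < c₂ < d₁ < d₂` are indices with `{v_{a₁}, v_{c₂}}`,
`{v_{a₂}, v_{c₁}}`, `{v_{b₁}, v_{d₂}}` and `{v_{b₂}, v_{d₁}}` edges of `G`, then `G`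
contains a cycle of length `n - (a₂-a₁-1) - (b₂-b₁-1) - (c₂-c₁-1) - (d₂-d₁-1)` whose
vertex set consists of all vertices except those `i` with `a₁ < i < a₂`,
`b₁ < i < b₂`, `c₁ < i < c₂` or `d₁ < i < d₂`. -/
theorem cycle_of_two_crossing_chord_pairs {n : ℕ} [NeZero n]
    (G : SimpleGraph (Fin n)) (hham : ∀ i : Fin n, G.Adj i (i + 1))
    (a₁ a₂ b₁ b₂ c₁ c₂ d₁ d₂ : Fin n)
    (h₁ : a₁ < a₂) (h₂ : a₂ < b₁) (h₃ : b₁ < b₂) (h₄ : b₂ < c₁) (h₅ : c₁ < c₂)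
    (h₆ : c₂ < d₁) (h₇ : d₁ < d₂)
    (e₁ : G.Adj a₁ c₂) (e₂ : G.Adj a₂ c₁) (e₃ : G.Adj b₁ d₂) (e₄ : G.Adj b₂ d₁) :
    ∃ (u : Fin n) (cyc : G.Walk u u), cyc.IsCycle ∧
      cyc.length =
        n - ((a₂ : ℕ) - (a₁ : ℕ) - 1) - ((b₂ : ℕ) - (b₁ : ℕ) - 1)
          - ((c₂ : ℕ) - (c₁ : ℕ) - 1) - ((d₂ : ℕ) - (d₁ : ℕ) - 1) ∧
      cyc.support.toFinset =
        Finset.univ.filter (fun i : Fin n =>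
          ¬ ((a₁ < i ∧ i < a₂) ∨ (b₁ < i ∧ i < b₂) ∨
             (c₁ < i ∧ i < c₂) ∨ (d₁ < i ∧ i < d₂))) := by
  have had : a₁ < d₂ := h₁.trans (h₂.trans (h₃.trans (h₄.trans (h₅.trans (h₆.trans h₇)))))
  let P : G.Walk c₂ a₁ := hamArcTo hham c₂ d₁ |>.append <| .cons e₄.symm <|
    hamArcTo hham b₂ c₁ |>.append <| .cons e₂.symm <|
    hamArcTo hham a₂ b₁ |>.append <| .cons e₃ <| hamArcTo hham d₂ a₁
  have hlen : P.length + 1 = n - ((a₂ : ℕ) - a₁ - 1) - ((b₂ : ℕ) - b₁ - 1)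
      - ((c₂ : ℕ) - c₁ - 1) - ((d₂ : ℕ) - d₁ - 1) := by
    simp only [P, Walk.length_append, Walk.length_cons, length_hamArcTo,
      Fin.coe_sub_iff_le.mpr h₆.le, Fin.coe_sub_iff_le.mpr h₄.le, Fin.coe_sub_iff_le.mpr h₂.le,
      Fin.coe_sub_iff_lt.mpr had]
    simp only [Fin.lt_def] at *
    omega
  have hsupp : P.support.toFinset = Finset.univ.filter (fun i : Fin n =>
      ¬ ((a₁ < i ∧ i < a₂) ∨ (b₁ < i ∧ i < b₂) ∨ (c₁ < i ∧ i < c₂) ∨ (d₁ < i ∧ i < d₂))) := by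
    ext v
    simp only [P, List.mem_toFinset, Walk.mem_support_append_iff, Walk.support_cons,
      List.mem_cons, mem_support_hamArcTo_of_le hham h₆.le, mem_support_hamArcTo_of_le hham h₄.le,
      mem_support_hamArcTo_of_le hham h₂.le, mem_support_hamArcTo_of_lt hham had,
      Finset.mem_filter, Finset.mem_univ, true_and, Fin.ext_iff, Fin.lt_def, Fin.le_def] at *
    omega
  have hP : P.IsPath := Walk.isPath_of_length_lt_card_support_toFinset <| by
    rw [hsupp, card_filter_not_mem_four_Ioo h₂.le h₃.le h₄.le h₅.le h₆.le]
    omega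
  refine ⟨a₁, .cons e₁ P, hP.isCycle_cons e₁ ?_, by simpa using hlen, ?_⟩
  · simp only [P, Walk.length_append, Walk.length_cons]
    omega
  · rw [Walk.support_cons, List.toFinset_cons, insert_eq_of_mem (by simp), hsupp]
end
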